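/- arXiv:1212.4588 — 2 statements merged into one kernel-verified Lean document; each statement's English description precedes it below -/
import Mathlib

section
/- The linear recursion x_{n+1} = x_n − α x_{n−2} (two-step-delay feedback with no noise) is asymptotically stable if and only if 0 < α < (√5 − 1)/2; in particular the critical gain is α* = (√5 − 1)/2 ≈ 0.62. -/
/-!
A non-real root `z = x + iy` of `z³ - z² + α` forces, through its imaginary part,
`y² = 3x² - 2x`; with `u := 2x - 1` this gives `‖z‖² = u(u + 1)` and `α = u²(u + 1)`, i.e.
`-u` is the real root and `z³ - z² + α = (z + u)(z² - (u + 1)z + u(u + 1))`.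
Since `φ⁻¹(φ⁻¹ + 1) = 1`, the complex pair leaves the unit disc exactly when `u ≥ φ⁻¹`, that is
when `α ≥ φ⁻¹ = (√5 - 1)/2`, while the real root leaves it (at `1`) exactly when `α ≤ 0`.
-/

open Complex Real
open scoped goldenRatio

lemma sqrt_five_sub_one_div_two_eq_inv_goldenRatio : (√5 - 1) / 2 = φ⁻¹ := by
  rw [inv_goldenRatio, goldenConj]; ring

lemma inv_goldenRatio_mul_inv_goldenRatio_add_one : φ⁻¹ * (φ⁻¹ + 1) = 1 := by
  rw [inv_goldenRatio, neg_add_eq_sub, one_sub_goldenRatio, neg_mul, goldenConj_mul_goldenRatio,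
    neg_neg]

lemma inv_goldenRatio_pos : 0 < φ⁻¹ := inv_pos.2 goldenRatio_pos

lemma one_half_lt_inv_goldenRatio : 1 / 2 < φ⁻¹ := by
  rw [one_div]; exact inv_strictAnti₀ goldenRatio_pos goldenRatio_lt_two

lemma exists_sq_norm_eq_of_cubic_root {α : ℝ} {z : ℂ} (hz : z ^ 3 - z ^ 2 + α = 0)
    (him : z.im ≠ 0) : ∃ u : ℝ, ‖z‖ ^ 2 = u * (u + 1) ∧ α = u ^ 2 * (u + 1) := by
  have hre := congrArg re hz
  have him' := congrArg im hz
  simp only [pow_succ, pow_zero, one_mul, mul_re, mul_im, add_re, add_im, sub_re, sub_im,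
    ofReal_re, ofReal_im, zero_re, zero_im] at hre him'
  have hy : z.im ^ 2 = 3 * z.re ^ 2 - 2 * z.re :=
    (mul_left_cancel₀ him (by linear_combination him')).symm
  refine ⟨2 * z.re - 1, ?_, ?_⟩
  · rw [Complex.sq_norm, normSq_apply]; linear_combination hy
  · linear_combination hre + (3 * z.re - 1) * hy

lemma exists_cubic_root_sq_norm_eq {u : ℝ} (hu : 1 / 3 ≤ u) :
    ∃ z : ℂ, z ^ 3 - z ^ 2 + (u ^ 2 * (u + 1) : ℝ) = 0 ∧ ‖z‖ ^ 2 = u * (u + 1) := by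
  set y := √((3 * u - 1) * (u + 1)) / 2
  have hy : y ^ 2 = (3 * u - 1) * (u + 1) / 4 := by
    rw [div_pow, sq_sqrt (by nlinarith)]; ring
  refine ⟨((u + 1) / 2 : ℝ) + y * I, ?_, ?_⟩
  · have hy' : (y : ℂ) ^ 2 = (3 * u - 1) * (u + 1) / 4 := by exact_mod_cast hy
    push_cast
    linear_combination (((u + 1) / 2 : ℂ) + y * I + u) * ((y : ℂ) ^ 2 * I_sq - hy')
  · rw [Complex.sq_norm, normSq_add_mul_I]; linear_combination hy

lemma abs_lt_one_of_cubic_root {α x : ℝ} (h0 : 0 < α) (h1 : α < 1)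
    (hx : x ^ 3 - x ^ 2 + α = 0) : |x| < 1 := by
  rw [abs_lt]
  constructor <;> nlinarith [sq_nonneg x, sq_nonneg (x + 1)]

lemma exists_cubic_root_one_le_of_nonpos {α : ℝ} (hα : α ≤ 0) :
    ∃ x : ℝ, 1 ≤ x ∧ x ^ 3 - x ^ 2 + α = 0 := by
  have hvalues : 0 ∈ Set.Icc (1 ^ 3 - 1 ^ 2 + α) ((1 - α) ^ 3 - (1 - α) ^ 2 + α) :=
    ⟨by linarith, by nlinarith [sq_nonneg α]⟩
  obtain ⟨x, hx, hroot⟩ := intermediate_value_Icc (by linarith : (1 : ℝ) ≤ 1 - α)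
    (f := fun x : ℝ => x ^ 3 - x ^ 2 + α) (by fun_prop) hvalues
  exact ⟨x, hx.1, hroot⟩

lemma exists_inv_goldenRatio_le_sq_mul_add_one_eq {α : ℝ} (hα : φ⁻¹ ≤ α) :
    ∃ u : ℝ, φ⁻¹ ≤ u ∧ u ^ 2 * (u + 1) = α := by
  have hc := inv_goldenRatio_mul_inv_goldenRatio_add_one
  have hc0 := inv_goldenRatio_pos
  have hvalues : α ∈ Set.Icc (φ⁻¹ ^ 2 * (φ⁻¹ + 1)) (α ^ 2 * (α + 1)) :=
    ⟨by linear_combination hα + φ⁻¹ * hc, by nlinarith [mul_le_mul hα hα hc0.le (hc0.le.trans hα)]⟩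
  obtain ⟨u, hu, hroot⟩ := intermediate_value_Icc hα
    (f := fun u : ℝ => u ^ 2 * (u + 1)) (by fun_prop) hvalues
  exact ⟨u, hu.1, hroot⟩

lemma norm_lt_one_of_cubic_root {α : ℝ} {z : ℂ} (h0 : 0 < α) (h1 : α < φ⁻¹)
    (hz : z ^ 3 - z ^ 2 + α = 0) : ‖z‖ < 1 := by
  rcases eq_or_ne z.im 0 with hreal | him
  · obtain ⟨x, rfl⟩ : ∃ x : ℝ, z = x := ⟨z.re, Complex.ext rfl (by simp [hreal])⟩
    rw [norm_real, Real.norm_eq_abs]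
    exact abs_lt_one_of_cubic_root h0 (h1.trans (inv_lt_one_of_one_lt₀ one_lt_goldenRatio))
      (by exact_mod_cast hz)
  · obtain ⟨u, hnorm, rfl⟩ := exists_sq_norm_eq_of_cubic_root hz him
    rw [← sq_lt_one_iff₀ (norm_nonneg z), hnorm]
    by_contra! hout
    have hc := inv_goldenRatio_mul_inv_goldenRatio_add_one
    have hu1 : 0 < u + 1 := by nlinarith [sq_nonneg u]
    have hu0 : 0 < u := by nlinarith
    have hu : φ⁻¹ ≤ u := by nlinarith [inv_goldenRatio_pos]
    have hαu : u ≤ u ^ 2 * (u + 1) := by nlinarith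
    linarith

lemma exists_cubic_root_one_le_norm {α : ℝ} (hα : α ≤ 0 ∨ φ⁻¹ ≤ α) :
    ∃ z : ℂ, z ^ 3 - z ^ 2 + α = 0 ∧ 1 ≤ ‖z‖ := by
  rcases hα with hα | hα
  · obtain ⟨x, hx1, hx⟩ := exists_cubic_root_one_le_of_nonpos hα
    refine ⟨x, by exact_mod_cast hx, ?_⟩
    rwa [norm_real, Real.norm_eq_abs, abs_of_nonneg (by linarith)]
  · obtain ⟨u, hu, rfl⟩ := exists_inv_goldenRatio_le_sq_mul_add_one_eq hα
    obtain ⟨z, hz, hnorm⟩ :=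
      exists_cubic_root_sq_norm_eq (u := u) (by linarith [one_half_lt_inv_goldenRatio])
    refine ⟨z, hz, ?_⟩
    rw [← one_le_sq_iff₀ (norm_nonneg z), hnorm]
    calc 1 = φ⁻¹ * (φ⁻¹ + 1) := inv_goldenRatio_mul_inv_goldenRatio_add_one.symm
      _ ≤ u * (u + 1) := by gcongr; exact inv_goldenRatio_pos.le.trans hu

/-- The two-step-delay linear recursion `x_{n+1} = x_n − α x_{n−2}` is
asymptotically stable (all roots of `z³ − z² + α` lie strictly inside the
unit circle) iff `0 < α < (√5 − 1)/2`. -/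
theorem two_step_delay_stability (α : ℝ) :
    (∀ z : ℂ, z^3 - z^2 + (α : ℂ) = 0 → ‖z‖ < 1) ↔
      (0 < α ∧ α < (Real.sqrt 5 - 1) / 2) := by
  rw [sqrt_five_sub_one_div_two_eq_inv_goldenRatio]
  constructor
  · intro hstable
    by_contra! hα
    obtain ⟨z, hz, hnorm⟩ := exists_cubic_root_one_le_norm (le_or_gt α 0 |>.imp_right hα)
    exact (hstable z hz).not_ge hnorm
  · rintro ⟨h0, h1⟩ z hz
    exact norm_lt_one_of_cubic_root h0 h1 hz
end

section
/- With exposure window [t_{n+1} − t_d − t_c/2, t_{n+1} − t_d + t_c/2] straddling the force switch at t_n (with the force F_{n−1} before t_n and F_n after), the camera-averaged position is x_n + (t_c/(8γ))(a₊ F_n − a₋ F_{n−1}), where a_± = [1 ± 2(t_s − t_d)/t_c]². Moreover, when t_d = t_s this reduces to x_n + (t_c/(8γ))(F_n − F_{n−1}). -/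
/-!
On each side of the switch the trajectory is affine, so the average over the exposure window
is the sum of two elementary integrals: the window extends `t_c/2 − (t_s − t_d)` before the
switch and `t_c/2 + (t_s − t_d)` after it, and each piece contributes `x_n` times its length
plus `±F/(2γ)` times its squared length, which after dividing by `t_c` gives the factors `a_±`.
-/

open intervalIntegral Set
open scoped Interval

theorem integral_ite_le_eq_add {g h : ℝ → ℝ} {a m b : ℝ} (ham : a ≤ m) (hmb : m ≤ b)
    (hg : IntervalIntegrable g MeasureTheory.volume a m)
    (hh : IntervalIntegrable h MeasureTheory.volume m b) :
    ∫ t in a..b, (if t ≤ m then g t else h t) = (∫ t in a..m, g t) + ∫ t in m..b, h t := by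
  have left : EqOn (fun t => if t ≤ m then g t else h t) g (Ι a m) := fun t ht => by
    rw [uIoc_of_le ham] at ht
    exact if_pos ht.2
  have right : EqOn (fun t => if t ≤ m then g t else h t) h (Ι m b) := fun t ht => by
    rw [uIoc_of_le hmb] at ht
    exact if_neg ht.1.not_ge
  rw [← integral_add_adjacent_intervals ((intervalIntegrable_congr left).mpr hg)
      ((intervalIntegrable_congr right).mpr hh),
    integral_congr_ae (MeasureTheory.ae_of_all _ left),
    integral_congr_ae (MeasureTheory.ae_of_all _ right)]

theorem integral_add_mul_sub (x k m a b : ℝ) :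
    ∫ t in a..b, (x + k * (t - m)) = x * (b - a) + k * ((b - m) ^ 2 - (a - m) ^ 2) / 2 := by
  rw [integral_comp_sub_right (fun s => x + k * s) m,
    integral_add intervalIntegrable_const (intervalIntegrable_id.const_mul k),
    integral_const_mul, integral_const, integral_id, smul_eq_mul]
  ring

theorem camera_average_bias_general_delay_general
    (γ tc ts td tnp1 xn Fp Fn : ℝ) (htc : 0 < tc)
    (hstraddle : |ts - td| ≤ tc / 2) :
    ((1 / tc) * ∫ t in (tnp1 - td - tc/2)..(tnp1 - td + tc/2),
        (if t ≤ tnp1 - ts then xn - (Fp / γ) * ((tnp1 - ts) - t)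
         else xn + (Fn / γ) * (t - (tnp1 - ts)))
      = xn + (tc / (8 * γ)) *
          ((1 + 2*(ts - td)/tc)^2 * Fn - (1 - 2*(ts - td)/tc)^2 * Fp))
    ∧ (td = ts →
        (1 / tc) * ∫ t in (tnp1 - td - tc/2)..(tnp1 - td + tc/2),
          (if t ≤ tnp1 - ts then xn - (Fp / γ) * ((tnp1 - ts) - t)
           else xn + (Fn / γ) * (t - (tnp1 - ts)))
        = xn + (tc / (8 * γ)) * (Fn - Fp)) := by
  obtain ⟨hlo, hhi⟩ := abs_le.mp hstraddle
  have before_switch (t : ℝ) :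
      xn - (Fp / γ) * ((tnp1 - ts) - t) = xn + (Fp / γ) * (t - (tnp1 - ts)) := by ring
  have average : (1 / tc) * ∫ t in (tnp1 - td - tc/2)..(tnp1 - td + tc/2),
        (if t ≤ tnp1 - ts then xn - (Fp / γ) * ((tnp1 - ts) - t)
         else xn + (Fn / γ) * (t - (tnp1 - ts)))
      = xn + (tc / (8 * γ)) *
          ((1 + 2*(ts - td)/tc)^2 * Fn - (1 - 2*(ts - td)/tc)^2 * Fp) := by
    simp only [before_switch]
    rw [integral_ite_le_eq_add (by linarith) (by linarith)
        ((by fun_prop : Continuous _).intervalIntegrable _ _)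
        ((by fun_prop : Continuous _).intervalIntegrable _ _),
      integral_add_mul_sub, integral_add_mul_sub]
    field_simp
    ring
  refine ⟨average, fun hts => ?_⟩
  rw [average, hts]
  norm_num

/-- General-delay camera average: with exposure window
`[t_{n+1} − t_d − t_c/2, t_{n+1} − t_d + t_c/2]` straddling the force switch
at `tₙ = t_{n+1} − tₛ`, the camera-averaged position is
`xₙ + (t_c/(8γ))(a₊ Fₙ − a₋ Fₙ₋₁)` with `a_± = (1 ± 2(tₛ − t_d)/t_c)²`;
when `t_d = tₛ` this reduces to `xₙ + (t_c/(8γ))(Fₙ − Fₙ₋₁)`. -/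
theorem camera_average_bias_general_delay
    (γ tc ts td tnp1 xn Fp Fn : ℝ) (hγ : 0 < γ) (htc : 0 < tc)
    (hts : 0 < ts) (htd : 0 < td) (hstraddle : |ts - td| ≤ tc / 2) :
    ((1 / tc) * ∫ t in (tnp1 - td - tc/2)..(tnp1 - td + tc/2),
        (if t ≤ tnp1 - ts then xn - (Fp / γ) * ((tnp1 - ts) - t)
         else xn + (Fn / γ) * (t - (tnp1 - ts)))
      = xn + (tc / (8 * γ)) *
          ((1 + 2*(ts - td)/tc)^2 * Fn - (1 - 2*(ts - td)/tc)^2 * Fp))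
    ∧ (td = ts →
        (1 / tc) * ∫ t in (tnp1 - td - tc/2)..(tnp1 - td + tc/2),
          (if t ≤ tnp1 - ts then xn - (Fp / γ) * ((tnp1 - ts) - t)
           else xn + (Fn / γ) * (t - (tnp1 - ts)))
        = xn + (tc / (8 * γ)) * (Fn - Fp)) :=
  camera_average_bias_general_delay_general γ tc ts td tnp1 xn Fp Fn htc hstraddle
end
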